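/- Bound on I: Under the setup assumptions, define I(t_s, t_e) := ∫_{t_s}^{t_e} ∑_{1≤i<j≤l} [f_i, f_j](θ, x(θ)) γ_{ij}(ω₁) dθ, where γ_{ij}(ω) := (ω^{p_i+p_j}/T) ∫₀^T ∫₀^θ u_j(ωθ) u_i(ωτ) dτ dθ with T := 2π/ω. Then ‖I(t_s, t_e)‖ ≤ 2π² l² L Λ₁ ‖x₀‖ ω₁^{p′−1}. -/

import Mathlib

open MeasureTheory Real Filter

noncomputable section

/-- The state space `ℝ^n`. -/
abbrev E (n : ℕ) := EuclideanSpace ℝ (Fin n)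

/-- Lie derivative `L_{f_a} f_b (t,x) = D_x f_b(t,x) [f_a(t,x)]`. -/
def lieDeriv {n : ℕ} (f : ℕ → ℝ → E n → E n)
    (Df : ℕ → ℝ → E n → (E n →L[ℝ] E n)) (a b : ℕ) (t : ℝ) (x : E n) : E n :=
  Df b t x (f a t x)

/-- Second Lie derivative `L_{f_m} L_{f_j} f_i (t,x) = D_x (L_{f_j} f_i)(t,x) [f_m(t,x)]`. -/
def lieDeriv2 {n : ℕ} (f : ℕ → ℝ → E n → E n)
    (Df : ℕ → ℝ → E n → (E n →L[ℝ] E n))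
    (DLf : ℕ → ℕ → ℝ → E n → (E n →L[ℝ] E n)) (m j i : ℕ) (t : ℝ) (x : E n) : E n :=
  DLf j i t x (f m t x)

/-- Lie bracket `[f_i, f_j] = L_{f_i} f_j − L_{f_j} f_i`. -/
def lieBracket {n : ℕ} (f : ℕ → ℝ → E n → E n)
    (Df : ℕ → ℝ → E n → (E n →L[ℝ] E n)) (i j : ℕ) (t : ℝ) (x : E n) : E n :=
  lieDeriv f Df i j t x - lieDeriv f Df j i t x

/-- `γ_{ij}(ω) = (ω^{p_i+p_j}/T) ∫₀^T ∫₀^θ u_j(ωθ) u_i(ωτ) dτ dθ`, `T = 2π/ω`. -/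
def gammaCoeff (p : ℕ → ℝ) (u : ℕ → ℝ → ℝ) (i j : ℕ) (ω : ℝ) : ℝ :=
  ω ^ (p i + p j) / (2 * π / ω) *
    ∫ θ in (0:ℝ)..(2 * π / ω), ∫ τ in (0:ℝ)..θ, u j (ω * θ) * u i (ω * τ)

/-- Regularity of a time-dependent vector field: continuous in the first argument,
globally uniformly `L`-Lipschitz in the second argument, and vanishing at `x = 0`. -/
def RegVF {n : ℕ} (L : ℝ) (g : ℝ → E n → E n) : Prop :=
  (∀ x, Continuous fun t => g t x) ∧
  (∀ t x y, ‖g t x - g t y‖ ≤ L * ‖x - y‖) ∧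
  (∀ t, g t 0 = 0)

/-- Standing assumptions: dither assumptions and vector-field assumptions. -/
structure Hyps {n : ℕ} (l : ℕ)
    (f : ℕ → ℝ → E n → E n)
    (Df : ℕ → ℝ → E n → (E n →L[ℝ] E n))
    (ft : ℕ → ℝ → E n → E n)
    (Lft : ℕ → ℕ → ℝ → E n → E n)
    (DLf : ℕ → ℕ → ℝ → E n → (E n →L[ℝ] E n))
    (u : ℕ → ℝ → ℝ) (p : ℕ → ℝ) (L : ℝ) : Prop where
  hp0 : p 0 = 0
  hu0 : ∀ t, u 0 t = 1
  hp : ∀ i, 1 ≤ i → i ≤ l → p i ∈ Set.Ioo (0:ℝ) 1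
  humeas : ∀ i, i ≤ l → Measurable (u i)
  hubdd : ∀ i, i ≤ l → ∀ t, |u i t| ≤ 1
  huper : ∀ i, i ≤ l → ∀ t, u i (t + 2 * π) = u i t
  huzm : ∀ i, 1 ≤ i → i ≤ l → (∫ t in (0:ℝ)..(2 * π), u i t) = 0
  hLpos : 0 < L
  hDf : ∀ i, i ≤ l → ∀ t x, HasFDerivAt (f i t) (Df i t x) x
  hft : ∀ i, i ≤ l → ∀ x t, HasDerivAt (fun s => f i s x) (ft i t x) t
  hLft : ∀ i j, i ≤ l → j ≤ l → ∀ x t,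
    HasDerivAt (fun s => lieDeriv f Df j i s x) (Lft j i t x) t
  hDLf : ∀ i j, i ≤ l → j ≤ l → ∀ t x,
    HasFDerivAt (fun y => lieDeriv f Df j i t y) (DLf j i t x) x
  hreg_f : ∀ i, i ≤ l → RegVF L (f i)
  hreg_ft : ∀ i, i ≤ l → RegVF L (ft i)
  hreg_Lf : ∀ i j, i ≤ l → j ≤ l → RegVF L (lieDeriv f Df j i)
  hreg_Lft : ∀ i j, i ≤ l → j ≤ l → RegVF L (Lft j i)
  hreg_LLf : ∀ i j m, i ≤ l → j ≤ l → m ≤ l → RegVF L (lieDeriv2 f Df DLf m j i)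

/-- The interaction condition on the powers `p_i` and the Lie brackets. -/
def InteractionCondition {n : ℕ} (l : ℕ) (f : ℕ → ℝ → E n → E n)
    (Df : ℕ → ℝ → E n → (E n →L[ℝ] E n)) (u : ℕ → ℝ → ℝ) (p : ℕ → ℝ) : Prop :=
  ∀ i j, 1 ≤ i → i ≤ l → 1 ≤ j → j ≤ l → 1 < p i + p j →
    (∀ ω : ℝ, 0 < ω → gammaCoeff p u i j ω = 0) ∨
    (∀ (t : ℝ) (x : E n), lieBracket f Df i j t x = 0)

/-- `x` is a (Carathéodory, i.e. integral-form) solution of the input-affine system (S)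
with dither frequency `ω` on the set `s`, with initial time `t₀`. -/
def IsSSol {n : ℕ} (l : ℕ) (f : ℕ → ℝ → E n → E n) (u : ℕ → ℝ → ℝ) (p : ℕ → ℝ)
    (ω : ℝ) (x : ℝ → E n) (s : Set ℝ) (t₀ : ℝ) : Prop :=
  ContinuousOn x s ∧
  ∀ t ∈ s, x t = x t₀ + ∫ τ in t₀..t,
    (f 0 τ (x τ) + ∑ i ∈ Finset.Icc 1 l, (ω ^ p i * u i (ω * τ)) • f i τ (x τ))

/-- `x` is a solution of the associated Lie-bracket system (LBS), with coefficients
`ν i j = lim_{ω → ∞} γ_{ij}(ω)`, on the set `s`, with initial time `t₀`. -/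
def IsLBSSol {n : ℕ} (l : ℕ) (f : ℕ → ℝ → E n → E n)
    (Df : ℕ → ℝ → E n → (E n →L[ℝ] E n)) (ν : ℕ → ℕ → ℝ)
    (x : ℝ → E n) (s : Set ℝ) (t₀ : ℝ) : Prop :=
  ContinuousOn x s ∧
  ∀ t ∈ s, x t = x t₀ + ∫ τ in t₀..t,
    (f 0 τ (x τ) + ∑ i ∈ Finset.Icc 1 l, ∑ j ∈ Finset.Ioc i l,
      ν i j • lieBracket f Df i j τ (x τ))

end
noncomputable section

/-- `V_i(t_s, t_e) = ∫_{t_s}^{t_e} ω₁^{p_i} u_i(ω₁ θ) dθ`. -/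
def Vi (u : ℕ → ℝ → ℝ) (p : ℕ → ℝ) (ω₁ : ℝ) (i : ℕ) (ts te : ℝ) : ℝ :=
  ∫ θ in ts..te, ω₁ ^ p i * u i (ω₁ * θ)

/-- `V_{ij}(t_s, t_e) = ∫_{t_s}^{t_e} ω₁^{p_i} u_i(ω₁ θ) V_j(t_s, θ) dθ`. -/
def Vij (u : ℕ → ℝ → ℝ) (p : ℕ → ℝ) (ω₁ : ℝ) (i j : ℕ) (ts te : ℝ) : ℝ :=
  ∫ θ in ts..te, (ω₁ ^ p i * u i (ω₁ * θ)) * Vi u p ω₁ j ts θ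

/-- The remainder `R(t_s, t_e)`. -/
def Rrem {n : ℕ} (l : ℕ) (f : ℕ → ℝ → E n → E n)
    (Df : ℕ → ℝ → E n → (E n →L[ℝ] E n))
    (DLf : ℕ → ℕ → ℝ → E n → (E n →L[ℝ] E n))
    (u : ℕ → ℝ → ℝ) (p : ℕ → ℝ) (ω₁ : ℝ) (x : ℝ → E n) (ts te : ℝ) : E n :=
  ∑ i ∈ Finset.Icc 1 l, ∑ j ∈ Finset.Icc 0 l, ∑ m ∈ Finset.Icc 0 l,
    ω₁ ^ (p i + p j + p m) •
      ∫ θ in ts..te, u i (ω₁ * θ) •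
        ∫ τ in ts..θ, u j (ω₁ * τ) •
          ∫ σ in ts..τ, u m (ω₁ * σ) • lieDeriv2 f Df DLf m j i σ (x σ)

/-- The term `Q_{V1}(t_s, t_e)`. -/
def QV1 {n : ℕ} (l : ℕ) (ft : ℕ → ℝ → E n → E n)
    (u : ℕ → ℝ → ℝ) (p : ℕ → ℝ) (ω₁ : ℝ) (x : ℝ → E n) (ts te : ℝ) : E n :=
  ∑ i ∈ Finset.Icc 1 l, ω₁ ^ p i •
    ∫ θ in ts..te, u i (ω₁ * θ) • ∫ τ in ts..θ, ft i τ (x τ)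

/-- The term `Q_{V2}(t_s, t_e)`. -/
def QV2 {n : ℕ} (l : ℕ) (Lft : ℕ → ℕ → ℝ → E n → E n)
    (u : ℕ → ℝ → ℝ) (p : ℕ → ℝ) (ω₁ : ℝ) (x : ℝ → E n) (ts te : ℝ) : E n :=
  ∑ i ∈ Finset.Ico 1 l, ∑ j ∈ Finset.Icc 0 l,
    ω₁ ^ (p i + p j) •
      ∫ θ in ts..te, u i (ω₁ * θ) •
        ∫ τ in ts..θ, u j (ω₁ * τ) • ∫ σ in ts..τ, Lft j i σ (x σ)

/-- The term `Q_1(t_s, t_e)`. -/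
def Q1 {n : ℕ} (l : ℕ) (f : ℕ → ℝ → E n → E n)
    (Df : ℕ → ℝ → E n → (E n →L[ℝ] E n))
    (u : ℕ → ℝ → ℝ) (p : ℕ → ℝ) (ω₁ : ℝ) (x : ℝ → E n) (ts te : ℝ) : E n :=
  ∑ i ∈ Finset.Icc 1 l, Vij u p ω₁ i 0 ts te • lieDeriv f Df 0 i ts (x ts)

/-- The term `Q_{1T}(t_s, t_e)`. -/
def Q1T {n : ℕ} (l : ℕ) (f : ℕ → ℝ → E n → E n)
    (Df : ℕ → ℝ → E n → (E n →L[ℝ] E n))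
    (u : ℕ → ℝ → ℝ) (p : ℕ → ℝ) (ω₁ : ℝ) (x : ℝ → E n) (ts te : ℝ) : E n :=
  (∑ i ∈ Finset.Icc 1 l, ∑ j ∈ Finset.Ioc i l,
    (Vi u p ω₁ i ts te * Vi u p ω₁ j ts te) • lieDeriv f Df j i ts (x ts))
  + (1/2 : ℝ) • ∑ i ∈ Finset.Icc 1 l,
      ((Vi u p ω₁ i ts te) ^ 2) • lieDeriv f Df i i ts (x ts)

/-- The term `H(t_s, t_e)`. -/
def Hterm {n : ℕ} (l : ℕ) (f : ℕ → ℝ → E n → E n)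
    (Df : ℕ → ℝ → E n → (E n →L[ℝ] E n))
    (u : ℕ → ℝ → ℝ) (p : ℕ → ℝ) (ω₁ : ℝ) (x : ℝ → E n) (ts te : ℝ) : E n :=
  (∑ i ∈ Finset.Icc 1 l, Vi u p ω₁ i ts te • f i ts (x ts))
  + ∑ i ∈ Finset.Icc 1 l, ∑ j ∈ Finset.Ioc i l,
      Vij u p ω₁ j i ts te • lieBracket f Df i j ts (x ts)

/-- The term `I(t_s, t_e)`. -/
def Iterm {n : ℕ} (l : ℕ) (f : ℕ → ℝ → E n → E n)
    (Df : ℕ → ℝ → E n → (E n →L[ℝ] E n))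
    (u : ℕ → ℝ → ℝ) (p : ℕ → ℝ) (ω₁ : ℝ) (x : ℝ → E n) (ts te : ℝ) : E n :=
  ∫ θ in ts..te, ∑ i ∈ Finset.Icc 1 l, ∑ j ∈ Finset.Ioc i l,
    gammaCoeff p u i j ω₁ • lieBracket f Df i j θ (x θ)

/-- The term `R_{L1}(t_s, t_e)`. -/
def RL1 {n : ℕ} (l : ℕ) (f : ℕ → ℝ → E n → E n)
    (Df : ℕ → ℝ → E n → (E n →L[ℝ] E n))
    (u : ℕ → ℝ → ℝ) (p : ℕ → ℝ) (ω₁ : ℝ) (x : ℝ → E n) (ts te : ℝ) : E n :=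
  ∑ i ∈ Finset.Icc 1 l, ∑ j ∈ Finset.Ioc i l,
    gammaCoeff p u i j ω₁ •
      ∫ θ in ts..te, (lieBracket f Df i j ts (x ts) - lieBracket f Df i j θ (x θ))

/-- The remainder `R_{T1}(t₀, t₁)`. -/
def RT1 {n : ℕ} (l : ℕ) (f : ℕ → ℝ → E n → E n)
    (Df : ℕ → ℝ → E n → (E n →L[ℝ] E n))
    (ft : ℕ → ℝ → E n → E n) (Lft : ℕ → ℕ → ℝ → E n → E n)
    (u : ℕ → ℝ → ℝ) (p : ℕ → ℝ) (ω₁ : ℝ) (x : ℝ → E n) (t₀ t₁ : ℝ) : E n :=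
  let T₁ : ℝ := 2 * π / ω₁
  let r : ℕ := ⌊(t₁ - t₀) / T₁⌋₊
  let tq : ℕ → ℝ := fun q => t₀ + (q : ℝ) * T₁
  (∑ q ∈ Finset.range r,
      (QV1 l ft u p ω₁ x (tq q) (tq (q+1)) + QV2 l Lft u p ω₁ x (tq q) (tq (q+1))
        + Q1 l f Df u p ω₁ x (tq q) (tq (q+1)) + RL1 l f Df u p ω₁ x (tq q) (tq (q+1))))
    - Iterm l f Df u p ω₁ x (tq r) t₁
    + QV1 l ft u p ω₁ x (tq r) t₁ + QV2 l Lft u p ω₁ x (tq r) t₁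
    + Q1 l f Df u p ω₁ x (tq r) t₁ + Q1T l f Df u p ω₁ x (tq r) t₁
    + Hterm l f Df u p ω₁ x (tq r) t₁

end


/-! Over one period `T = 2π/ω` the inner integral in `γ_{ij}` is at most `θ`, so the double
integral is at most `T²/2` and `|γ_{ij}(ω)| ≤ π ω^{p_i+p_j-1}`. The integrand of `I` is then
bounded pointwise by `π l² L ‖x‖ ω^{p′}` (at most `l²/2` brackets, each of norm `≤ 2L‖x‖`, and
`p_i + p_j - 1 ≤ p′` because `p_j < 1`); integrating over an interval of length at most `T₁`
gives the factor `2π/ω₁`. -/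

open Finset

theorem two_mul_sum_Icc_sub_le_sq (l : ℕ) : 2 * ∑ i ∈ Icc 1 l, (l - i) ≤ l ^ 2 := by
  induction l with
  | zero => simp
  | succ m ih =>
    have hshift : ∑ i ∈ Icc 1 m, (m + 1 - i) = ∑ i ∈ Icc 1 m, (m - i) + m := by
      rw [sum_congr rfl fun i hi => (by grind : m + 1 - i = (m - i) + 1), sum_add_distrib]
      simp
    rw [sum_Icc_succ_top (by omega), Nat.sub_self, add_zero, hshift]
    nlinarith

theorem norm_sum_Icc_sum_Ioc_le {G : Type*} [SeminormedAddCommGroup G] (l : ℕ)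
    (v : ℕ → ℕ → G) {C : ℝ} (hC : 0 ≤ C) (hv : ∀ i ∈ Icc 1 l, ∀ j ∈ Ioc i l, ‖v i j‖ ≤ C) :
    ‖∑ i ∈ Icc 1 l, ∑ j ∈ Ioc i l, v i j‖ ≤ l ^ 2 / 2 * C := by
  have hcount : ((∑ i ∈ Icc 1 l, (l - i) : ℕ) : ℝ) ≤ l ^ 2 / 2 := by
    have := two_mul_sum_Icc_sub_le_sq l
    rw [le_div_iff₀ two_pos, mul_comm]
    exact_mod_cast this
  calc ‖∑ i ∈ Icc 1 l, ∑ j ∈ Ioc i l, v i j‖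
      ≤ ∑ i ∈ Icc 1 l, ∑ j ∈ Ioc i l, ‖v i j‖ :=
        (norm_sum_le _ _).trans (sum_le_sum fun i _ => norm_sum_le _ _)
    _ ≤ ∑ i ∈ Icc 1 l, ∑ _j ∈ Ioc i l, C := sum_le_sum fun i hi => sum_le_sum (hv i hi)
    _ = ((∑ i ∈ Icc 1 l, (l - i) : ℕ) : ℝ) * C := by
        simp only [sum_const, Nat.card_Ioc, nsmul_eq_mul, ← sum_mul, Nat.cast_sum]
    _ ≤ l ^ 2 / 2 * C := mul_le_mul_of_nonneg_right hcount hC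

theorem norm_integral_integral_le {G : Type*} [NormedAddCommGroup G] [NormedSpace ℝ G]
    {F : ℝ → ℝ → G} {C T : ℝ} (hT : 0 ≤ T) (hF : ∀ θ τ, ‖F θ τ‖ ≤ C) :
    ‖∫ θ in (0 : ℝ)..T, ∫ τ in (0 : ℝ)..θ, F θ τ‖ ≤ C * (T ^ 2 / 2) := by
  have hinner : ∀ θ ∈ Set.Ioc 0 T, ‖∫ τ in (0 : ℝ)..θ, F θ τ‖ ≤ C * θ := fun θ hθ => by
    simpa [abs_of_pos hθ.1] using
      intervalIntegral.norm_integral_le_of_norm_le_const (a := 0) (b := θ) fun τ _ => hF θ τ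
  calc ‖∫ θ in (0 : ℝ)..T, ∫ τ in (0 : ℝ)..θ, F θ τ‖
      ≤ ∫ θ in (0 : ℝ)..T, C * θ :=
        intervalIntegral.norm_integral_le_of_norm_le hT (ae_of_all _ hinner)
          ((continuous_const.mul continuous_id).intervalIntegrable _ _)
    _ = C * (T ^ 2 / 2) := by rw [intervalIntegral.integral_const_mul, integral_id]; ring

theorem abs_gammaCoeff_le (p : ℕ → ℝ) (u : ℕ → ℝ → ℝ) (i j : ℕ) {ω : ℝ} (hω : 0 < ω)
    (hui : ∀ t, |u i t| ≤ 1) (huj : ∀ t, |u j t| ≤ 1) :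
    |gammaCoeff p u i j ω| ≤ π * ω ^ (p i + p j - 1) := by
  have hT : 0 < 2 * π / ω := by positivity
  have hJ := norm_integral_integral_le (F := fun θ τ => u j (ω * θ) * u i (ω * τ)) hT.le
    fun θ τ => by
      rw [Real.norm_eq_abs, abs_mul]
      exact mul_le_one₀ (huj _) (abs_nonneg _) (hui _)
  rw [Real.norm_eq_abs] at hJ
  calc |gammaCoeff p u i j ω|
      = ω ^ (p i + p j) / (2 * π / ω) *
          |∫ θ in (0 : ℝ)..2 * π / ω, ∫ τ in (0 : ℝ)..θ, u j (ω * θ) * u i (ω * τ)| := by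
        rw [gammaCoeff, abs_mul, abs_of_pos (by positivity)]
    _ ≤ ω ^ (p i + p j) / (2 * π / ω) * (1 * ((2 * π / ω) ^ 2 / 2)) := by gcongr
    _ = π * ω ^ (p i + p j - 1) := by
        rw [Real.rpow_sub_one hω.ne']
        field_simp

theorem RegVF.norm_le {n : ℕ} {L : ℝ} {g : ℝ → E n → E n} (hg : RegVF L g) (t : ℝ) (x : E n) :
    ‖g t x‖ ≤ L * ‖x‖ := by
  simpa [hg.2.2 t] using hg.2.1 t x 0

theorem norm_lieBracket_le {n : ℕ} {f : ℕ → ℝ → E n → E n}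
    {Df : ℕ → ℝ → E n → (E n →L[ℝ] E n)} {L : ℝ} {i j : ℕ}
    (hij : RegVF L (lieDeriv f Df i j)) (hji : RegVF L (lieDeriv f Df j i)) (t : ℝ) (x : E n) :
    ‖lieBracket f Df i j t x‖ ≤ 2 * L * ‖x‖ := by
  calc ‖lieBracket f Df i j t x‖
      ≤ ‖lieDeriv f Df i j t x‖ + ‖lieDeriv f Df j i t x‖ := norm_sub_le _ _
    _ ≤ L * ‖x‖ + L * ‖x‖ := add_le_add (hij.norm_le t x) (hji.norm_le t x)
    _ = 2 * L * ‖x‖ := by ring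

theorem norm_sum_gammaCoeff_smul_lieBracket_le {n : ℕ} {l : ℕ}
    {f : ℕ → ℝ → E n → E n} {Df : ℕ → ℝ → E n → (E n →L[ℝ] E n)}
    {ft : ℕ → ℝ → E n → E n} {Lft : ℕ → ℕ → ℝ → E n → E n}
    {DLf : ℕ → ℕ → ℝ → E n → (E n →L[ℝ] E n)} {u : ℕ → ℝ → ℝ} {p : ℕ → ℝ} {L : ℝ}
    (hyp : Hyps l f Df ft Lft DLf u p L) {ω p' : ℝ} (hω : 1 ≤ ω)
    (hp' : ∀ i, 1 ≤ i → i ≤ l → p i ≤ p') (t : ℝ) (y : E n) :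
    ‖∑ i ∈ Icc 1 l, ∑ j ∈ Ioc i l, gammaCoeff p u i j ω • lieBracket f Df i j t y‖
      ≤ π * l ^ 2 * L * ‖y‖ * ω ^ p' := by
  have hω0 : 0 < ω := zero_lt_one.trans_le hω
  have hterm : ∀ i ∈ Icc 1 l, ∀ j ∈ Ioc i l,
      ‖gammaCoeff p u i j ω • lieBracket f Df i j t y‖ ≤ π * ω ^ p' * (2 * L * ‖y‖) := by
    intro i hi j hj
    simp only [mem_Icc, mem_Ioc] at hi hj
    have hexp : p i + p j - 1 ≤ p' := by
      linarith [hp' i hi.1 hi.2, (hyp.hp j (by omega) hj.2).2]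
    have hγ : |gammaCoeff p u i j ω| ≤ π * ω ^ p' :=
      (abs_gammaCoeff_le p u i j hω0 (hyp.hubdd i hi.2) (hyp.hubdd j hj.2)).trans
        (by gcongr)
    rw [norm_smul, Real.norm_eq_abs]
    exact mul_le_mul hγ
      (norm_lieBracket_le (hyp.hreg_Lf j i hj.2 hi.2) (hyp.hreg_Lf i j hi.2 hj.2) t y)
      (norm_nonneg _) (by positivity)
  have hC : 0 ≤ π * ω ^ p' * (2 * L * ‖y‖) := by have hL := hyp.hLpos; positivity
  calc _ ≤ l ^ 2 / 2 * (π * ω ^ p' * (2 * L * ‖y‖)) := norm_sum_Icc_sum_Ioc_le l _ hC hterm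
    _ = π * l ^ 2 * L * ‖y‖ * ω ^ p' := by ring

theorem bound_I_general
    {n : ℕ} (l : ℕ)
    (f : ℕ → ℝ → E n → E n)
    (Df : ℕ → ℝ → E n → (E n →L[ℝ] E n))
    (ft : ℕ → ℝ → E n → E n)
    (Lft : ℕ → ℕ → ℝ → E n → E n)
    (DLf : ℕ → ℕ → ℝ → E n → (E n →L[ℝ] E n))
    (u : ℕ → ℝ → ℝ) (p : ℕ → ℝ) (L : ℝ)
    (hyp : Hyps l f Df ft Lft DLf u p L)
    -- setup: a bounded solution of (S) with frequency `ω₁ ≥ 1` on `[t₀, t₁]`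
    (t₀ t₁ ω₁ Λ₁ : ℝ) (x₀ : E n) (x : ℝ → E n)
    (hω₁ : 1 ≤ ω₁)
    (hxb : ∀ t ∈ Set.Icc t₀ t₁, ‖x t‖ ≤ Λ₁ * ‖x₀‖)
    -- `p′ = max_{1 ≤ i ≤ l} p i`
    (p' : ℝ)
    (hp'ub : ∀ i, 1 ≤ i → i ≤ l → p i ≤ p')
    -- `t_s ∈ [t₀, t_r]` and `t_e ∈ [t_s, min (t_s + T₁) t₁]`, where `T₁ = 2π/ω₁`
    (ts te : ℝ)
    (hts : ts ∈ Set.Icc t₀ (t₀ + (⌊(t₁ - t₀) / (2 * π / ω₁)⌋₊ : ℝ) * (2 * π / ω₁)))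
    (hte : te ∈ Set.Icc ts (min (ts + 2 * π / ω₁) t₁)) :
    ‖Iterm l f Df u p ω₁ x ts te‖
      ≤ 2 * π ^ 2 * l ^ 2 * L * Λ₁ * ‖x₀‖ * ω₁ ^ (p' - 1) := by
  have hω₁0 : 0 < ω₁ := zero_lt_one.trans_le hω₁
  have hte_le : te ≤ ts + 2 * π / ω₁ := hte.2.trans (min_le_left _ _)
  have hsub : Set.Icc ts te ⊆ Set.Icc t₀ t₁ :=
    Set.Icc_subset_Icc hts.1 (hte.2.trans (min_le_right _ _))
  set K := π * l ^ 2 * L * (Λ₁ * ‖x₀‖) * ω₁ ^ p'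
  have hL := hyp.hLpos
  have hK : 0 ≤ K := by
    have hΛ := (norm_nonneg _).trans (hxb ts (hsub ⟨le_rfl, hte.1⟩))
    positivity
  have hintegrand : ∀ θ ∈ Set.uIoc ts te, ‖∑ i ∈ Icc 1 l, ∑ j ∈ Ioc i l,
      gammaCoeff p u i j ω₁ • lieBracket f Df i j θ (x θ)‖ ≤ K := fun θ hθ => by
    rw [Set.uIoc_of_le hte.1] at hθ
    refine (norm_sum_gammaCoeff_smul_lieBracket_le hyp hω₁ hp'ub θ (x θ)).trans ?_
    have hxθ := hxb θ (hsub (Set.Ioc_subset_Icc_self hθ))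
    show _ ≤ π * l ^ 2 * L * (Λ₁ * ‖x₀‖) * ω₁ ^ p'
    gcongr
  calc ‖Iterm l f Df u p ω₁ x ts te‖
      ≤ K * |te - ts| := intervalIntegral.norm_integral_le_of_norm_le_const hintegrand
    _ ≤ K * (2 * π / ω₁) := by
        rw [abs_of_nonneg (sub_nonneg.2 hte.1)]
        gcongr
        linarith
    _ = 2 * π ^ 2 * l ^ 2 * L * Λ₁ * ‖x₀‖ * ω₁ ^ (p' - 1) := by
        rw [Real.rpow_sub_one hω₁0.ne']
        ring

/-- **Bound on `I`** (Lemma 12). -/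
theorem bound_I
    {n : ℕ} (l : ℕ)
    (f : ℕ → ℝ → E n → E n)
    (Df : ℕ → ℝ → E n → (E n →L[ℝ] E n))
    (ft : ℕ → ℝ → E n → E n)
    (Lft : ℕ → ℕ → ℝ → E n → E n)
    (DLf : ℕ → ℕ → ℝ → E n → (E n →L[ℝ] E n))
    (u : ℕ → ℝ → ℝ) (p : ℕ → ℝ) (L : ℝ)
    (hyp : Hyps l f Df ft Lft DLf u p L)
    -- setup: a bounded solution of (S) with frequency `ω₁ ≥ 1` on `[t₀, t₁]`
    (t₀ t₁ ω₁ Λ₁ : ℝ) (x₀ : E n) (x : ℝ → E n)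
    (h01 : t₀ < t₁) (hω₁ : 1 ≤ ω₁) (hΛ₁ : 1 ≤ Λ₁)
    (hx0 : x t₀ = x₀)
    (hsol : IsSSol l f u p ω₁ x (Set.Icc t₀ t₁) t₀)
    (hxb : ∀ t ∈ Set.Icc t₀ t₁, ‖x t‖ ≤ Λ₁ * ‖x₀‖)
    -- `p′ = max_{1 ≤ i ≤ l} p i`
    (p' : ℝ)
    (hp'ub : ∀ i, 1 ≤ i → i ≤ l → p i ≤ p')
    (hp'mem : ∃ i, 1 ≤ i ∧ i ≤ l ∧ p i = p')
    -- `t_s ∈ [t₀, t_r]` and `t_e ∈ [t_s, min (t_s + T₁) t₁]`, where `T₁ = 2π/ω₁`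
    (ts te : ℝ)
    (hts : ts ∈ Set.Icc t₀ (t₀ + (⌊(t₁ - t₀) / (2 * π / ω₁)⌋₊ : ℝ) * (2 * π / ω₁)))
    (hte : te ∈ Set.Icc ts (min (ts + 2 * π / ω₁) t₁)) :
    ‖Iterm l f Df u p ω₁ x ts te‖
      ≤ 2 * π ^ 2 * l ^ 2 * L * Λ₁ * ‖x₀‖ * ω₁ ^ (p' - 1) :=
  bound_I_general l f Df ft Lft DLf u p L hyp t₀ t₁ ω₁ Λ₁ x₀ x hω₁ hxb p' hp'ub ts te hts hte
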